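/- arXiv:1210.7440 — 5 statements merged into one kernel-verified Lean document; each statement's English description precedes it below -/
import Mathlib

section
/- Let G be a finite group, F an algebraically closed field, π an irreducible F-representation of G, and σ : G → G an anti-involution (a bijection with σ(gh) = σ(h)σ(g) and σ∘σ = id). Suppose v₁, v₂ ∈ π and 0 ≠ φ ∈ π* are such that the matrix coefficient functions g ↦ φ(π(g)vᵢ) are σ-invariant, i.e. φ(π(g)vᵢ) = φ(π(σ(g))vᵢ) for all g ∈ G and i = 1,2. Then v₁ and v₂ are linearly dependent. -/
/-!
By Burnside's theorem the rank-one operator `x ↦ φ x • v₁` equals `∑ c g • π g` for some `c`.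
Applying σ-invariance of the matrix coefficients of a vector `v` at the elements `g x h`
exchanges `∑ c x • π x` with `∑ c x • π (σ x)` inside matrix coefficients. For `v = v₁` this
shows that `∑ c x • π (σ x)` is the same rank-one operator; for `v = v₂` it then gives
`f₂ h * f₁ g = f₂ g * f₁ h` for the coefficient functions `fᵢ g = φ (π g vᵢ)`, so `f₁` and
`f₂` are dependent. Irreducibility makes `v ↦ (g ↦ φ (π g v))` injective, so `v₁` and `v₂` are
dependent too.
-/

/-- A representation is irreducible if it is nonzero and the only invariant
submodules are `⊥` and `⊤`. -/
def Representation.IsIrreducible' {k G V : Type*} [CommSemiring k] [Monoid G]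
    [AddCommMonoid V] [Module k V] (π : Representation k G V) : Prop :=
  Nontrivial V ∧ ∀ U : Submodule k V, (∀ g : G, ∀ v ∈ U, π g v ∈ U) → U = ⊥ ∨ U = ⊤

theorem IsSimpleModule.lsmul_surjective_of_isAlgClosed {A V : Type*} (k : Type*) [Field k]
    [Ring A] [Algebra k A] [AddCommGroup V] [Module k V] [Module A V] [IsScalarTower k A V]
    [IsSimpleModule A V] [FiniteDimensional k V] [IsAlgClosed k] :
    Function.Surjective (Algebra.lsmul k k V : A →ₐ[k] Module.End k V) := by
  intro f
  let f' : Module.End (Module.End A V) V :=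
    { f with
      map_smul' e m := by
        obtain ⟨c, rfl⟩ := (algebraMap_end_bijective_of_isAlgClosed k).2 e
        simp }
  have : Module.Finite (Module.End A V) V := .of_restrictScalars_finite k _ V
  obtain ⟨a, ha⟩ := Module.Finite.toModuleEnd_moduleEnd_surjective f'
  exact ⟨a, LinearMap.ext fun m ↦ congr($ha m)⟩

theorem not_linearIndependent_pair_of_mul_comm {ι R : Type*} [CommRing R] [Nontrivial R]
    {f₁ f₂ : ι → R} (h : ∀ i j, f₂ j * f₁ i = f₂ i * f₁ j) :
    ¬ LinearIndependent R ![f₁, f₂] := by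
  intro hli
  obtain ⟨j, hj⟩ : ∃ j, f₂ j ≠ 0 := by
    by_contra! h₀
    exact hli.ne_zero 1 (funext h₀)
  refine hj (LinearIndependent.pair_iff.mp hli (f₂ j) (-f₁ j) (funext fun i ↦ ?_)).1
  simp only [Pi.add_apply, Pi.smul_apply, smul_eq_mul, Pi.zero_apply, h i j]
  ring

namespace Representation

variable {k G V : Type*} [Monoid G]

theorem IsIrreducible'.isIrreducible [Field k] [AddCommGroup V] [Module k V]
    {π : Representation k G V} (hπ : π.IsIrreducible') : π.IsIrreducible :=
  have := hπ.1
  { exists_pair_ne := ⟨⊥, ⊤, fun h ↦ bot_ne_top congr(($h).toSubmodule)⟩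
    eq_bot_or_eq_top U := (hπ.2 U.toSubmodule U.apply_mem_toSubmodule).imp
      (fun h ↦ Subrepresentation.toSubmodule_injective h)
      (fun h ↦ Subrepresentation.toSubmodule_injective h) }

theorem IsIrreducible.exists_sum_smul_eq [Field k] [Fintype G] [AddCommGroup V] [Module k V]
    [FiniteDimensional k V] [IsAlgClosed k] (π : Representation k G V) [π.IsIrreducible]
    (A : Module.End k V) : ∃ c : G → k, ∑ g, c g • π g = A := by
  have hsurj := IsSimpleModule.lsmul_surjective_of_isAlgClosed k (A := MonoidAlgebra k G)
    (V := π.asModule)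
  obtain ⟨a, rfl⟩ := hsurj A
  refine ⟨a.coeff, ?_⟩
  change _ = π.asAlgebraHom a
  rw [π.asAlgebraHom_def, MonoidAlgebra.lift_apply, Finsupp.sum_fintype _ _ (by simp)]

variable [CommRing k] [AddCommGroup V] [Module k V] (π : Representation k G V)

def matrixCoeff (φ : Module.Dual k V) : V →ₗ[k] G → k :=
  LinearMap.pi fun g ↦ φ ∘ₗ π g

@[simp]
theorem matrixCoeff_apply (φ : Module.Dual k V) (v : V) (g : G) :
    π.matrixCoeff φ v g = φ (π g v) :=
  rfl

variable {π}

theorem IsIrreducible'.ker_matrixCoeff (hπ : π.IsIrreducible') {φ : Module.Dual k V}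
    (hφ : φ ≠ 0) : LinearMap.ker (π.matrixCoeff φ) = ⊥ := by
  refine (hπ.2 _ fun g v hv ↦ ?_).resolve_right fun htop ↦ hφ (LinearMap.ext fun v ↦ ?_)
  · ext h
    simpa [← Module.End.mul_apply, ← map_mul] using congr_fun hv (h * g)
  · simpa using congr_fun (LinearMap.congr_fun (LinearMap.ker_eq_top.mp htop) v) 1

theorem IsIrreducible'.span_orbit (hπ : π.IsIrreducible') {v : V} (hv : v ≠ 0) :
    Submodule.span k (Set.range fun g ↦ π g v) = ⊤ := by
  refine (hπ.2 _ fun g w hw ↦ ?_).resolve_left fun hbot ↦ hv ?_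
  · induction hw using Submodule.span_induction with
    | mem y hy =>
      obtain ⟨h, rfl⟩ := hy
      exact Submodule.subset_span ⟨g * h, by simp⟩
    | zero => simp
    | add a b _ _ ha hb => simpa using Submodule.add_mem _ ha hb
    | smul c a _ ha => simpa using Submodule.smul_mem _ c ha
  · simpa [hbot] using Submodule.subset_span (R := k) (s := Set.range fun g ↦ π g v) ⟨1, by simp⟩

section AntiInvolution

variable [Fintype G] {σ : G → G} {φ : Module.Dual k V} {v w : V}

theorem dual_apply_sum_smul_apply_anti (hanti : ∀ g h, σ (g * h) = σ h * σ g)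
    (hv : ∀ g, φ (π g v) = φ (π (σ g) v)) (c : G → k) (g h : G) :
    φ (π g ((∑ x, c x • π x) (π h v))) = φ (π (σ h) ((∑ x, c x • π (σ x)) (π (σ g) v))) := by
  simp only [LinearMap.sum_apply, LinearMap.smul_apply, map_sum, map_smul]
  refine Finset.sum_congr rfl fun x _ ↦ ?_
  simp only [← Module.End.mul_apply, ← map_mul]
  rw [hv, hanti, hanti, mul_assoc]

theorem IsIrreducible'.sum_smul_anti_eq_smulRight (hπ : π.IsIrreducible') (hφ : φ ≠ 0)
    (hanti : ∀ g h, σ (g * h) = σ h * σ g) (hinv : ∀ g, σ (σ g) = g) (hv0 : v ≠ 0)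
    (hv : ∀ g, φ (π g v) = φ (π (σ g) v)) {c : G → k} (hc : ∑ x, c x • π x = φ.smulRight v) :
    ∑ x, c x • π (σ x) = φ.smulRight v := by
  refine LinearMap.ext_on_range (hπ.span_orbit hv0) fun g ↦ ?_
  refine LinearMap.ker_eq_bot.mp (hπ.ker_matrixCoeff hφ) (funext fun h ↦ ?_)
  have := dual_apply_sum_smul_apply_anti hanti hv c (σ g) (σ h)
  simp only [hinv, hc, LinearMap.smulRight_apply, map_smul, smul_eq_mul] at this
  simp only [matrixCoeff_apply, ← this, LinearMap.smulRight_apply, map_smul, smul_eq_mul,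
    ← hv, mul_comm]

theorem matrixCoeff_mul_comm_of_sum_smul_eq_smulRight (hanti : ∀ g h, σ (g * h) = σ h * σ g)
    (hv : ∀ g, φ (π g v) = φ (π (σ g) v)) (hw : ∀ g, φ (π g w) = φ (π (σ g) w))
    {c : G → k} (hc : ∑ x, c x • π x = φ.smulRight v) (hσc : ∑ x, c x • π (σ x) = φ.smulRight v)
    (g h : G) : φ (π h w) * φ (π g v) = φ (π g w) * φ (π h v) := by
  have := dual_apply_sum_smul_apply_anti hanti hw c g h
  simpa only [hc, hσc, LinearMap.smulRight_apply, map_smul, smul_eq_mul, ← hv, ← hw] using this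

end AntiInvolution

end Representation

open Representation in
/-- matrix coefficients invariant under an anti-involution force
linear dependence of the two vectors. -/
theorem stmt0 {G F V : Type*} [Group G] [Fintype G] [Field F] [IsAlgClosed F]
    [AddCommGroup V] [Module F V] [FiniteDimensional F V]
    (π : Representation F G V) (hirr : π.IsIrreducible')
    (σ : G → G) (hanti : ∀ g h : G, σ (g * h) = σ h * σ g) (hinv : ∀ g, σ (σ g) = g)
    (v₁ v₂ : V) (φ : Module.Dual F V) (hφ : φ ≠ 0)
    (h1 : ∀ g : G, φ (π g v₁) = φ (π (σ g) v₁))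
    (h2 : ∀ g : G, φ (π g v₂) = φ (π (σ g) v₂)) :
    ¬ LinearIndependent F ![v₁, v₂] := by
  intro hli
  have := hirr.isIrreducible
  have hv₁ : v₁ ≠ 0 := by simpa using hli.ne_zero 0
  obtain ⟨c, hc⟩ := IsIrreducible.exists_sum_smul_eq π (φ.smulRight v₁)
  have hσc := hirr.sum_smul_anti_eq_smulRight hφ hanti hinv hv₁ h1 hc
  refine not_linearIndependent_pair_of_mul_comm (f₁ := π.matrixCoeff φ v₁)
    (f₂ := π.matrixCoeff φ v₂) (matrixCoeff_mul_comm_of_sum_smul_eq_smulRight hanti h1 h2 hc hσc) ?_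
  have hcoeff := hli.map' _ (hirr.ker_matrixCoeff hφ)
  rwa [show π.matrixCoeff φ ∘ ![v₁, v₂] = ![π.matrixCoeff φ v₁, π.matrixCoeff φ v₂] by
    ext i : 1; fin_cases i <;> rfl] at hcoeff
end

section
/- (Gelfand trick) Let H < G be finite groups and σ an anti-involution of G such that σ(HgH) = HgH for every g ∈ G. Then over an algebraically closed field of characteristic zero, (G,H) is a Gelfand pair: for every irreducible representation π of G, dim π^H ≤ 1. -/
/-!
The `H`-invariants `V^H` are the image of the averaging projection `P`, and the Hecke algebra of
`H`-bi-invariant functions on `G` acts on them through the operators `v ↦ P (π g v)`; when `π` is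
irreducible, `V^H` is an irreducible module for this family. Since `σ` preserves the double
cosets, `f ↦ f ∘ σ` is an anti-automorphism of the convolution algebra fixing every bi-invariant
function, so the Hecke algebra is commutative. Over an algebraically closed field an irreducible
module for a commuting family of operators has dimension at most one.
-/

open Module Representation

lemma Representation.IsIrreducible'.span_orbit_eq_top {k G V : Type*} [CommSemiring k]
    [Monoid G] [AddCommMonoid V] [Module k V] {π : Representation k G V} (hπ : π.IsIrreducible')
    {v : V} (hv : v ≠ 0) : Submodule.span k (Set.range fun g => π g v) = ⊤ := by
  set U := Submodule.span k (Set.range fun g => π g v)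
  have hU : ∀ g, U ≤ U.comap (π g) := fun g => Submodule.span_le.mpr <| by
    rintro _ ⟨g', rfl⟩
    exact Submodule.subset_span ⟨g * g', by simp⟩
  refine (hπ.2 U fun g w hw => hU g hw).resolve_left fun hbot => hv ?_
  have hvU : v ∈ U := Submodule.subset_span ⟨1, by simp⟩
  rwa [hbot, Submodule.mem_bot] at hvU

/-- Schur's lemma for a commuting family: each `T i` has an eigenspace which all `T j` preserve,
so it is all of `W`; hence every line is invariant. -/
theorem finrank_le_one_of_commute_of_irreducible {ι F W : Type*} [Field F] [IsAlgClosed F]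
    [AddCommGroup W] [Module F W] [FiniteDimensional F W] (T : ι → End F W)
    (hcomm : ∀ i j, Commute (T i) (T j))
    (hirr : ∀ U : Submodule F W, (∀ i, ∀ w ∈ U, T i w ∈ U) → U = ⊥ ∨ U = ⊤) :
    finrank F W ≤ 1 := by
  cases subsingleton_or_nontrivial W with
  | inl _ => simp [finrank_zero_of_subsingleton]
  | inr _ =>
  have hscalar : ∀ i, ∃ c : F, ∀ w, T i w = c • w := fun i => by
    obtain ⟨c, hc⟩ := End.exists_eigenvalue (T i)
    have htop : (T i).eigenspace c = ⊤ :=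
      (hirr _ fun j w hw => End.mapsTo_genEigenspace_of_comm (hcomm i j) c 1 hw).resolve_left hc
    exact ⟨c, fun w => End.mem_eigenspace_iff.mp (Submodule.eq_top_iff'.mp htop w)⟩
  obtain ⟨w, hw⟩ := exists_ne (0 : W)
  have hline : Submodule.span F {w} = ⊤ := by
    refine (hirr _ fun i v hv => ?_).resolve_left (by simpa using hw)
    obtain ⟨c, hc⟩ := hscalar i
    exact hc v ▸ Submodule.smul_mem _ c hv
  exact finrank_le_one w fun v =>
    Submodule.mem_span_singleton.mp (Submodule.eq_top_iff'.mp hline v)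

namespace Gelfand

section DoubleCosets

variable {G α : Type*} [Group G]

def IsBiInvariant (H : Subgroup G) (f : G → α) : Prop :=
  ∀ h ∈ H, ∀ x, f (h * x) = f x ∧ f (x * h) = f x

lemma map_one_of_antiHom {σ : G → G} (hanti : ∀ g h, σ (g * h) = σ h * σ g) : σ 1 = 1 := by
  simpa using hanti 1 1

lemma map_inv_of_antiHom {σ : G → G} (hanti : ∀ g h, σ (g * h) = σ h * σ g) (g : G) :
    σ g⁻¹ = (σ g)⁻¹ :=
  eq_inv_of_mul_eq_one_left <| by rw [← hanti, mul_inv_cancel, map_one_of_antiHom hanti]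

lemma comp_eq_self_of_isBiInvariant {H : Subgroup G} {σ : G → G}
    (hcosets : ∀ g : G, σ '' DoubleCoset.doubleCoset g (H : Set G) (H : Set G)
      = DoubleCoset.doubleCoset g (H : Set G) (H : Set G))
    {f : G → α} (hf : IsBiInvariant H f) : f ∘ σ = f := by
  funext x
  have hx : σ x ∈ DoubleCoset.doubleCoset x (H : Set G) (H : Set G) :=
    hcosets x ▸ Set.mem_image_of_mem σ (DoubleCoset.mem_doubleCoset_self H H x)
  obtain ⟨a, ha, b, hb, hab⟩ := DoubleCoset.mem_doubleCoset.mp hx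
  rw [Function.comp_apply, hab, (hf b hb _).2, (hf a ha x).1]

noncomputable def averageFun (F : Type*) [Semiring F] (H : Subgroup G) [Fintype H]
    [Invertible (Fintype.card H : F)] : G → F :=
  (H : Set G).indicator fun _ => ⅟(Fintype.card H : F)

lemma isBiInvariant_averageFun {F : Type*} [Semiring F] (H : Subgroup G) [Fintype H]
    [Invertible (Fintype.card H : F)] : IsBiInvariant H (averageFun F H) := fun h hh x => by
  classical
  simp only [averageFun, Set.indicator_apply, SetLike.mem_coe, H.mul_mem_cancel_left hh,
    H.mul_mem_cancel_right hh, and_self]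

end DoubleCosets

section Convolution

variable {G F : Type*} [Group G] [Fintype G] [CommSemiring F]

noncomputable def conv (f₁ f₂ : G → F) : G → F := fun x => ∑ y, f₁ y * f₂ (y⁻¹ * x)

lemma conv_mul_left {f₁ : G → F} (f₂ : G → F) {a : G} (h₁ : ∀ x, f₁ (a * x) = f₁ x) (x : G) :
    conv f₁ f₂ (a * x) = conv f₁ f₂ x :=
  Fintype.sum_equiv (Equiv.mulLeft a⁻¹) _ _ fun y => by
    rw [Equiv.coe_mulLeft, ← h₁ (a⁻¹ * y), mul_inv_cancel_left, mul_inv_rev, inv_inv, mul_assoc]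

lemma conv_mul_right (f₁ : G → F) {f₂ : G → F} {b : G} (h₂ : ∀ x, f₂ (x * b) = f₂ x) (x : G) :
    conv f₁ f₂ (x * b) = conv f₁ f₂ x := by
  simp only [conv, ← mul_assoc, h₂]

lemma isBiInvariant_conv {H : Subgroup G} {f₁ f₂ : G → F}
    (h₁ : ∀ h ∈ H, ∀ x, f₁ (h * x) = f₁ x) (h₂ : ∀ h ∈ H, ∀ x, f₂ (x * h) = f₂ x) :
    IsBiInvariant H (conv f₁ f₂) :=
  fun h hh x => ⟨conv_mul_left f₂ (h₁ h hh) x, conv_mul_right f₁ (h₂ h hh) x⟩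

lemma conv_comp_of_antiHom {σ : G → G} (hanti : ∀ g h, σ (g * h) = σ h * σ g)
    (hσ : σ.Bijective) (f₁ f₂ : G → F) :
    conv f₁ f₂ ∘ σ = conv (f₂ ∘ σ) (f₁ ∘ σ) := by
  funext x
  refine (Fintype.sum_equiv ((Equiv.inv G).trans ((Equiv.mulRight x).trans
    (Equiv.ofBijective σ hσ))) _ _ fun z => ?_).symm
  simp only [Function.comp_apply, Equiv.trans_apply, Equiv.inv_apply, Equiv.coe_mulRight,
    Equiv.ofBijective_apply]
  rw [mul_comm, hanti, mul_inv_rev, map_inv_of_antiHom hanti, inv_inv, inv_mul_cancel_right]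

lemma conv_comm_of_isBiInvariant {H : Subgroup G} {σ : G → G}
    (hanti : ∀ g h, σ (g * h) = σ h * σ g) (hσ : σ.Bijective)
    (hcosets : ∀ g : G, σ '' DoubleCoset.doubleCoset g (H : Set G) (H : Set G)
      = DoubleCoset.doubleCoset g (H : Set G) (H : Set G))
    {f₁ f₂ : G → F} (h₁ : IsBiInvariant H f₁) (h₂ : IsBiInvariant H f₂) :
    conv f₁ f₂ = conv f₂ f₁ := by
  have hconv := isBiInvariant_conv (fun h hh x => (h₁ h hh x).1) fun h hh x => (h₂ h hh x).2
  rw [← comp_eq_self_of_isBiInvariant hcosets hconv, conv_comp_of_antiHom hanti hσ,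
    comp_eq_self_of_isBiInvariant hcosets h₁, comp_eq_self_of_isBiInvariant hcosets h₂]

variable (F) in
noncomputable def heckeFun [DecidableEq G] (H : Subgroup G) [Fintype H]
    [Invertible (Fintype.card H : F)] (g : G) : G → F :=
  conv (conv (averageFun F H) (Pi.single g 1)) (averageFun F H)

lemma isBiInvariant_heckeFun [DecidableEq G] (H : Subgroup G) [Fintype H]
    [Invertible (Fintype.card H : F)] (g : G) : IsBiInvariant H (heckeFun F H g) :=
  isBiInvariant_conv
    (fun h hh x => conv_mul_left _ (fun y => ((isBiInvariant_averageFun H) h hh y).1) x)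
    fun h hh x => ((isBiInvariant_averageFun H) h hh x).2

end Convolution

end Gelfand

open Gelfand

section

variable {G F V : Type*} [Group G] [Fintype G] [CommSemiring F] [AddCommMonoid V] [Module F V]

noncomputable def Representation.linearCombination (π : Representation F G V) (f : G → F) :
    End F V :=
  ∑ g, f g • π g

namespace Representation

variable (π : Representation F G V)

lemma linearCombination_conv (f₁ f₂ : G → F) :
    π.linearCombination (conv f₁ f₂) = π.linearCombination f₁ * π.linearCombination f₂ := by
  simp only [linearCombination, conv, Finset.sum_mul_sum, Finset.sum_smul, smul_mul_smul_comm,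
    ← map_mul]
  refine Finset.sum_comm.trans (Finset.sum_congr rfl fun y _ =>
    Fintype.sum_equiv (Equiv.mulLeft y⁻¹) _ _ fun x => ?_)
  rw [Equiv.coe_mulLeft, mul_inv_cancel_left]

lemma linearCombination_single [DecidableEq G] (g : G) :
    π.linearCombination (Pi.single g 1) = π g := by
  simp [linearCombination, Pi.single_apply, ite_smul]

end Representation

end

section Invariants

variable {G F V : Type*} [Group G] [CommRing F] [AddCommGroup V] [Module F V]
  (π : Representation F G V) (H : Subgroup G) [Fintype H] [Invertible (Fintype.card H : F)]

namespace Representation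

/-- The action of the Hecke operator `heckeFun F H g` on the `H`-invariants. -/
noncomputable def heckeOp (g : G) : End F (invariants (π.comp H.subtype)) :=
  (averageMap (π.comp H.subtype)).codRestrict _ (averageMap_invariant _) ∘ₗ π g ∘ₗ
    Submodule.subtype _

lemma heckeOp_apply (g : G) (w : invariants (π.comp H.subtype)) :
    (π.heckeOp H g w : V) = averageMap (π.comp H.subtype) (π g w) := rfl

variable {π H}

/-- A nonzero invariant `w` generates `V` under `G`, so averaging shows that the `P (π g w)` span
the invariants. -/
theorem heckeOp_irreducible (hπ : π.IsIrreducible')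
    (U : Submodule F (invariants (π.comp H.subtype)))
    (hU : ∀ g, ∀ w ∈ U, π.heckeOp H g w ∈ U) : U = ⊥ ∨ U = ⊤ := by
  refine or_iff_not_imp_left.mpr fun hne => eq_top_iff.mpr fun v _ => ?_
  obtain ⟨w, hwU, hw⟩ := Submodule.exists_mem_ne_zero_of_ne_bot hne
  set P := (averageMap (π.comp H.subtype)).codRestrict _ (averageMap_invariant _)
  have hspan := hπ.span_orbit_eq_top (v := (w : V)) (by simpa using hw)
  have hPv : P v = v := Subtype.ext (averageMap_id _ _ v.2)
  have hmem := Submodule.mem_map_of_mem (f := P) (Submodule.eq_top_iff'.mp hspan v)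
  rw [Submodule.map_span, ← Set.range_comp, hPv] at hmem
  refine Submodule.span_le.mpr ?_ hmem
  rintro _ ⟨g, rfl⟩
  exact hU g w hwU

variable [Fintype G]

lemma linearCombination_averageFun :
    π.linearCombination (averageFun F H) = averageMap (π.comp H.subtype) := by
  classical
  simp only [linearCombination, averageFun, averageMap, GroupAlgebra.average, map_smul, map_sum,
    asAlgebraHom_of, Finset.smul_sum, MonoidHom.coe_comp, Function.comp_apply,
    Subgroup.coe_subtype]
  rw [← Finset.sum_subtype {g | g ∈ H} (by simp) (fun g => ⅟(Fintype.card H : F) • π g)]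
  simp [Set.indicator_apply, Finset.sum_ite]

lemma linearCombination_heckeFun [DecidableEq G] (g : G) :
    π.linearCombination (heckeFun F H g) =
      averageMap (π.comp H.subtype) * π g * averageMap (π.comp H.subtype) := by
  rw [heckeFun, linearCombination_conv, linearCombination_conv, linearCombination_single,
    linearCombination_averageFun]

theorem heckeOp_commute {σ : G → G}
    (hanti : ∀ g h, σ (g * h) = σ h * σ g) (hσ : σ.Bijective)
    (hcosets : ∀ g : G, σ '' DoubleCoset.doubleCoset g (H : Set G) (H : Set G)
      = DoubleCoset.doubleCoset g (H : Set G) (H : Set G)) (g g' : G) :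
    Commute (π.heckeOp H g) (π.heckeOp H g') := by
  classical
  set P := averageMap (π.comp H.subtype)
  have hP : ∀ v, P (P v) = P v := fun v => averageMap_id _ _ (averageMap_invariant _ v)
  have hcomm : Commute (P * π g * P) (P * π g' * P) := by
    rw [← linearCombination_heckeFun, ← linearCombination_heckeFun, Commute, SemiconjBy,
      ← linearCombination_conv, ← linearCombination_conv,
      conv_comm_of_isBiInvariant hanti hσ hcosets (isBiInvariant_heckeFun H g)
        (isBiInvariant_heckeFun H g')]
  ext w
  have hPw : P w = w := averageMap_id _ _ w.2
  change P (π g (P (π g' w))) = P (π g' (P (π g w)))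
  simpa only [Module.End.mul_apply, hPw, hP] using congr($hcomm.eq (w : V))

end Representation

end Invariants

/-- Gelfand trick: an anti-involution preserving all `H` double
cosets makes `(G,H)` a Gelfand pair over an algebraically closed field of
characteristic zero. -/
theorem stmt2 {G F : Type*} [Group G] [Fintype G] [Field F] [IsAlgClosed F] [CharZero F]
    (H : Subgroup G)
    (σ : G → G) (hanti : ∀ g h : G, σ (g * h) = σ h * σ g) (hinv : ∀ g, σ (σ g) = g)
    (hcosets : ∀ g : G, σ '' DoubleCoset.doubleCoset g (H : Set G) (H : Set G)
        = DoubleCoset.doubleCoset g (H : Set G) (H : Set G)) :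
    ∀ (V : Type*) [AddCommGroup V] [Module F V] [FiniteDimensional F V]
      (π : Representation F G V), π.IsIrreducible' →
      Module.finrank F (Representation.invariants (V := V) (π.comp H.subtype)) ≤ 1 := by
  intro V _ _ _ π hπ
  classical
  have : Invertible (Fintype.card H : F) :=
    invertibleOfNonzero (Nat.cast_ne_zero.mpr Fintype.card_ne_zero)
  exact finrank_le_one_of_commute_of_irreducible (π.heckeOp H)
    (π.heckeOp_commute hanti (Function.Involutive.bijective hinv) hcosets)
    (π.heckeOp_irreducible hπ)
end

section
/- For every prime power q and every n ≥ 1, and every pair of nonzero vectors φ, v ∈ (F_q)ⁿ, there exists an invertible symmetric matrix B ∈ GL_n(F_q) such that Bφ = v. -/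
/-!
Congruence `B ↦ Lᵀ * B * L` by an invertible `L` preserves invertible symmetric matrices and turns
a solution for `(L *ᵥ φ, v)` into one for `(φ, Lᵀ *ᵥ v)`, so one may assume `φ = e_k`. An invertible
symmetric matrix with prescribed `k`-th column `u` is again a congruence transform, by a rank-one
perturbation `L` of the identity with `L e_k = e_k`: of `diag(u k, 1, …, 1)` if `u k ≠ 0`, and of
the transposition matrix of `j, k` if `u k = 0 ≠ u j`.
-/

open Matrix

section transpose

variable {n α : Type*} [Fintype n] [CommSemiring α] {B : Matrix n n α}

theorem Matrix.IsSymm.transpose_mul_mul (hB : B.IsSymm) (L : Matrix n n α) :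
    (Lᵀ * B * L).IsSymm := by
  rw [IsSymm, transpose_mul, transpose_mul, transpose_transpose, hB.eq, Matrix.mul_assoc]

theorem IsUnit.transpose_mul_mul [DecidableEq n] (hB : IsUnit B) {L : Matrix n n α}
    (hL : IsUnit L) : IsUnit (Lᵀ * B * L) :=
  ((isUnit_transpose L).mpr hL |>.mul hB).mul hL

end transpose

section congruence

variable {ι F : Type*} [DecidableEq ι] [Field F]

theorem Matrix.transpose_one_add_vecMulVec (u w : ι → F) :
    (1 + vecMulVec u w)ᵀ = 1 + vecMulVec w u := by
  rw [transpose_add, transpose_one, transpose_vecMulVec]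

variable [Fintype ι]

theorem Matrix.isUnit_one_add_vecMulVec {u w : ι → F} (h : 1 + w ⬝ᵥ u ≠ 0) :
    IsUnit (1 + vecMulVec u w) := by
  rw [isUnit_iff_isUnit_det, vecMulVec_eq Unit, det_one_add_replicateCol_mul_replicateRow]
  exact h.isUnit

theorem Matrix.one_add_vecMulVec_mulVec (u w x : ι → F) :
    (1 + vecMulVec u w) *ᵥ x = x + (w ⬝ᵥ x) • u := by
  rw [add_mulVec, one_mulVec, vecMulVec_mulVec, op_smul_eq_smul]

theorem Equiv.Perm.isUnit_permMatrix (σ : Equiv.Perm ι) : IsUnit (σ.permMatrix F) := by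
  rw [isUnit_iff_isUnit_det, det_permutation]
  exact (Equiv.Perm.sign σ).isUnit.map (Int.castRingHom F)

theorem Matrix.exists_isUnit_mulVec_eq_single {φ : ι → F} {k : ι} (hk : φ k ≠ 0) :
    ∃ M : Matrix ι ι F, IsUnit M ∧ M *ᵥ φ = Pi.single k 1 := by
  refine ⟨1 + vecMulVec ((φ k)⁻¹ • (Pi.single k 1 - φ)) (Pi.single k 1), ?_, ?_⟩
  · apply isUnit_one_add_vecMulVec
    rw [single_one_dotProduct]
    simp [mul_sub, hk]
  · rw [one_add_vecMulVec_mulVec, single_one_dotProduct, smul_smul, mul_inv_cancel₀ hk, one_smul,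
      add_sub_cancel]

theorem Matrix.exists_isUnit_isSymm_mulVec_single_eq {u : ι → F} (hu : u ≠ 0) (k : ι) :
    ∃ B : Matrix ι ι F, IsUnit B ∧ B.IsSymm ∧ B *ᵥ Pi.single k 1 = u := by
  by_cases huk : u k = 0
  · obtain ⟨j, hj⟩ := Function.ne_iff.mp hu
    have hjk : j ≠ k := by rintro rfl; exact hj huk
    set S := (Equiv.swap j k).permMatrix F
    set L := 1 + vecMulVec (Pi.single j 1) (u - Pi.single j 1)
    have hS : S.IsSymm := by simp [S, IsSymm, transpose_permMatrix]
    have hL : IsUnit L := isUnit_one_add_vecMulVec (by simpa using hj)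
    have hSk : S *ᵥ Pi.single k 1 = Pi.single j 1 := by
      ext i; simp [S, Pi.single_apply, Equiv.swap_apply_eq_iff]
    have hLk : L *ᵥ Pi.single k 1 = Pi.single k 1 := by
      rw [one_add_vecMulVec_mulVec, dotProduct_single_one]
      simp [huk, hjk]
    have hLtj : Lᵀ *ᵥ Pi.single j 1 = u := by
      rw [transpose_one_add_vecMulVec, one_add_vecMulVec_mulVec, single_one_dotProduct]
      simp
    refine ⟨Lᵀ * S * L, (Equiv.swap j k).isUnit_permMatrix.transpose_mul_mul hL,
      hS.transpose_mul_mul L, ?_⟩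
    rw [← mulVec_mulVec, ← mulVec_mulVec, hLk, hSk, hLtj]
  · set D := diagonal (Function.update 1 k (u k))
    set L := 1 + vecMulVec (Pi.single k 1) ((u k)⁻¹ • u - Pi.single k 1)
    have hD : IsUnit D := by
      refine isUnit_diagonal.mpr (Pi.isUnit_iff.mpr fun i => ?_)
      by_cases hi : i = k <;> simp [hi, huk]
    have hL : IsUnit L := isUnit_one_add_vecMulVec (by simp [huk])
    have hDk : D *ᵥ Pi.single k 1 = Pi.single k (u k) := by
      ext i; by_cases hi : i = k <;> simp [D, mulVec_diagonal, hi]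
    have hLk : L *ᵥ Pi.single k 1 = Pi.single k 1 := by
      rw [one_add_vecMulVec_mulVec, dotProduct_single_one]
      simp [huk]
    have hLtk : Lᵀ *ᵥ Pi.single k (u k) = u := by
      rw [transpose_one_add_vecMulVec, one_add_vecMulVec_mulVec, single_dotProduct]
      ext i; by_cases hi : i = k <;> simp [hi, huk]
    refine ⟨Lᵀ * D * L, hD.transpose_mul_mul hL, (isSymm_diagonal _).transpose_mul_mul L, ?_⟩
    rw [← mulVec_mulVec, ← mulVec_mulVec, hLk, hDk, hLtk]

theorem Matrix.exists_isUnit_isSymm_mulVec_eq {φ v : ι → F} (hφ : φ ≠ 0) (hv : v ≠ 0) :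
    ∃ B : Matrix ι ι F, IsUnit B ∧ B.IsSymm ∧ B *ᵥ φ = v := by
  obtain ⟨k, hk⟩ := Function.ne_iff.mp hφ
  obtain ⟨M, hM, hMφ⟩ := exists_isUnit_mulVec_eq_single hk
  obtain ⟨u, hMu⟩ := mulVec_surjective_iff_isUnit.mpr ((isUnit_transpose M).mpr hM) v
  have hu : u ≠ 0 := by
    rintro rfl
    exact hv (by rw [← hMu, mulVec_zero])
  obtain ⟨B, hB, hBs, hBk⟩ := exists_isUnit_isSymm_mulVec_single_eq hu k
  refine ⟨Mᵀ * B * M, hB.transpose_mul_mul hM, hBs.transpose_mul_mul M, ?_⟩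
  rw [← mulVec_mulVec, ← mulVec_mulVec, hMφ, hBk, hMu]

end congruence

theorem stmt6_general (F : Type*) [Field F] (n : ℕ)
    (φ v : Fin n → F) (hφ : φ ≠ 0) (hv : v ≠ 0) :
    ∃ B : Matrix (Fin n) (Fin n) F, IsUnit B ∧ B.transpose = B ∧ B.mulVec φ = v :=
  exists_isUnit_isSymm_mulVec_eq hφ hv

/-- over any finite field, for any two nonzero vectors `φ, v`
there is an invertible symmetric matrix `B` with `B φ = v`. -/
theorem stmt6 (F : Type*) [Field F] [Fintype F] (n : ℕ) (hn : 1 ≤ n)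
    (φ v : Fin n → F) (hφ : φ ≠ 0) (hv : v ≠ 0) :
    ∃ B : Matrix (Fin n) (Fin n) F, IsUnit B ∧ B.transpose = B ∧ B.mulVec φ = v :=
  stmt6_general F n φ v hφ hv
end

section
/- For n ≥ 1 and q a prime power, every matrix A' ∈ GL_{n+1}(F_q) whose upper-left n×n block A has rank n, and whose last-column vector v and last-row vector φ (of length n) are both nonzero, lies in the same GL_n(F_q)-double coset as its transpose: there exist B, C ∈ GL_n(F_q) with diag(B,1)·A'·diag(C,1) = (A')ᵀ. -/
/-!
Write `A' = [[A, v], [φ, d]]` with `A` invertible. For `C = A⁻¹ B⁻¹ Aᵀ` the block equation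
reduces to `B v = φ` and `w B = u`, where `w = A⁻¹ v` and `u = φ A⁻¹`; these two prescriptions
are compatible since `u ⬝ v = φ A⁻¹ v = w ⬝ φ`. Such a `B` exists because the orbits of `GL(V)`
on pairs `(x, f)` of a nonzero vector and a nonzero functional are classified by the value
`f x`: splitting `V ≃ ker f × K` along a vector `p` with `f p = 1` reduces this to the
transitivity of `GL(ker f)` on nonzero vectors.
-/

open Matrix Module LinearMap

namespace Module.Dual

variable {K V W : Type*} [Field K] [AddCommGroup V] [Module K V] [AddCommGroup W] [Module K W]

def kerProdEquiv (f : Dual K V) (p : V) (hp : f p = 1) : V ≃ₗ[K] ker f × K where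
  toFun z := (⟨z - f z • p, by simp [hp]⟩, f z)
  invFun kt := kt.1 + kt.2 • p
  map_add' z z' := by ext <;> simp [add_smul]; abel
  map_smul' t z := by ext <;> simp [smul_sub, mul_smul]
  left_inv z := by simp
  right_inv kt := by
    obtain ⟨⟨k, hk⟩, t⟩ := kt
    rw [mem_ker] at hk
    ext <;> simp [hk, hp]

@[simp]
theorem kerProdEquiv_apply_snd (f : Dual K V) (p : V) (hp : f p = 1) (z : V) :
    (kerProdEquiv f p hp z).2 = f z :=
  rfl

@[simp]
theorem kerProdEquiv_symm_apply (f : Dual K V) (p : V) (hp : f p = 1) (kt : ker f × K) :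
    (kerProdEquiv f p hp).symm kt = kt.1 + kt.2 • p :=
  rfl

theorem exists_linearEquiv_extend_ker {f : Dual K V} {g : Dual K W} {p : V} {q : W}
    (hp : f p = 1) (hq : g q = 1) (e : ker f ≃ₗ[K] ker g) :
    ∃ E : V ≃ₗ[K] W, (∀ z, g (E z) = f z) ∧
      ∀ (k : ker f) (t : K), E (k + t • p) = e k + t • q := by
  refine ⟨kerProdEquiv f p hp ≪≫ₗ e.prodCongr (LinearEquiv.refl K K) ≪≫ₗ
    (kerProdEquiv g q hq).symm, fun z => ?_, fun k t => ?_⟩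
  · simp [mem_ker.mp (e _).2, hq]
  · rw [← kerProdEquiv_symm_apply f p hp (k, t)]
    simp only [LinearEquiv.trans_apply, LinearEquiv.apply_symm_apply, LinearEquiv.prodCongr_apply,
      LinearEquiv.refl_apply]
    rfl

variable [FiniteDimensional K V] [FiniteDimensional K W]

theorem finrank_ker_eq_of_ne_zero (h : finrank K V = finrank K W) {f : Dual K V}
    {g : Dual K W} (hf : f ≠ 0) (hg : g ≠ 0) : finrank K (ker f) = finrank K (ker g) := by
  have := finrank_ker_add_one_of_ne_zero hf
  have := finrank_ker_add_one_of_ne_zero hg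
  omega

theorem exists_linearEquiv_apply_eq_of_apply_eq_ne_zero (h : finrank K V = finrank K W)
    {f : Dual K V} {g : Dual K W} {x : V} {y : W} (hfx : f x ≠ 0) (hfg : f x = g y) :
    ∃ E : V ≃ₗ[K] W, E x = y ∧ ∀ z, g (E z) = f z := by
  have hgy : g y ≠ 0 := hfg ▸ hfx
  have hker := finrank_ker_eq_of_ne_zero h (f := f) (g := g)
    (fun hf => hfx (by simp [hf])) (fun hg => hgy (by simp [hg]))
  obtain ⟨E, hEg, hE⟩ := exists_linearEquiv_extend_ker (p := (f x)⁻¹ • x) (q := (g y)⁻¹ • y)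
    (by simp [hfx]) (by simp [hgy]) (LinearEquiv.ofFinrankEq _ _ hker)
  refine ⟨E, ?_, hEg⟩
  simpa [smul_smul, hfx, hgy, hfg] using hE 0 (f x)

end Module.Dual

section

variable {K V W : Type*} [Field K] [AddCommGroup V] [Module K V] [AddCommGroup W] [Module K W]
  [FiniteDimensional K V] [FiniteDimensional K W]

theorem exists_linearEquiv_apply_eq (h : finrank K V = finrank K W) {x : V} {y : W}
    (hx : x ≠ 0) (hy : y ≠ 0) : ∃ E : V ≃ₗ[K] W, E x = y := by
  obtain ⟨f, hf⟩ := Projective.exists_dual_eq_one K hx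
  obtain ⟨g, hg⟩ := Projective.exists_dual_eq_one K hy
  obtain ⟨E, hE, -⟩ := Dual.exists_linearEquiv_apply_eq_of_apply_eq_ne_zero h (f := f) (g := g)
    (by simp [hf]) (hf.trans hg.symm)
  exact ⟨E, hE⟩

theorem Module.Dual.exists_linearEquiv_apply_eq_of_apply_eq (h : finrank K V = finrank K W)
    {f : Dual K V} {g : Dual K W} {x : V} {y : W} (hx : x ≠ 0) (hy : y ≠ 0)
    (hf : f ≠ 0) (hg : g ≠ 0) (hfg : f x = g y) :
    ∃ E : V ≃ₗ[K] W, E x = y ∧ ∀ z, g (E z) = f z := by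
  by_cases hfx : f x ≠ 0
  · exact exists_linearEquiv_apply_eq_of_apply_eq_ne_zero h hfx hfg
  have hxf : x ∈ ker f := not_not.mp hfx
  have hyg : y ∈ ker g := by rw [mem_ker, ← hfg]; exact not_not.mp hfx
  obtain ⟨e, he⟩ := exists_linearEquiv_apply_eq (finrank_ker_eq_of_ne_zero h hf hg)
    (x := ⟨x, hxf⟩) (y := ⟨y, hyg⟩) (by simpa using hx) (by simpa using hy)
  obtain ⟨p, hp⟩ := LinearMap.surjective hf 1
  obtain ⟨q, hq⟩ := LinearMap.surjective hg 1
  obtain ⟨E, hEg, hE⟩ := exists_linearEquiv_extend_ker hp hq e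
  refine ⟨E, ?_, hEg⟩
  simpa [he] using hE ⟨x, hxf⟩ 0

end

namespace Matrix

section Field

variable {K m : Type*} [Field K] [Fintype m] [DecidableEq m]

theorem isUnit_of_rank_eq_card {A : Matrix m m K} (h : A.rank = Fintype.card m) : IsUnit A := by
  rw [← mulVec_surjective_iff_isUnit, ← coe_mulVecLin, ← LinearMap.range_eq_top]
  exact Submodule.eq_top_of_finrank_eq (by simpa [rank] using h)

theorem exists_isUnit_mulVec_eq_and_vecMul_eq {x y u w : m → K} (hx : x ≠ 0) (hy : y ≠ 0)
    (hu : u ≠ 0) (hw : w ≠ 0) (h : u ⬝ᵥ x = w ⬝ᵥ y) :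
    ∃ B : Matrix m m K, IsUnit B ∧ B *ᵥ x = y ∧ w ᵥ* B = u := by
  obtain ⟨E, hE, hEg⟩ := Dual.exists_linearEquiv_apply_eq_of_apply_eq rfl hx hy
    (by simpa using hu : dotProductEquiv K m u ≠ 0) (by simpa using hw : dotProductEquiv K m w ≠ 0) h
  refine ⟨LinearMap.toMatrix' E, isUnit_toMatrix'_iff.mpr ?_, by simpa using hE, ?_⟩
  · exact (Module.End.isUnit_iff _).mpr E.bijective
  · apply (dotProductEquiv K m).injective
    refine LinearMap.ext fun z => ?_
    simpa [← dotProduct_mulVec] using hEg z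

theorem exists_isUnit_mul_mul_eq_transpose {A : Matrix m m K} (hA : IsUnit A) {v φ : m → K}
    (hv : v ≠ 0) (hφ : φ ≠ 0) :
    ∃ B C : Matrix m m K, IsUnit B ∧ IsUnit C ∧ B * A * C = Aᵀ ∧ B *ᵥ v = φ ∧ φ ᵥ* C = v := by
  have hdet : IsUnit A.det := (isUnit_iff_isUnit_det A).mp hA
  have hAinv : IsUnit A⁻¹ := isUnit_nonsing_inv_iff.mpr hA
  have hw : A⁻¹ *ᵥ v ≠ 0 := by simpa using (mulVec_injective_iff_isUnit.mpr hAinv).ne hv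
  have hu : φ ᵥ* A⁻¹ ≠ 0 := by simpa using (vecMul_injective_iff_isUnit.mpr hAinv).ne hφ
  obtain ⟨B, hB, hBv, hBw⟩ := exists_isUnit_mulVec_eq_and_vecMul_eq hv hφ hu hw
    (by rw [← dotProduct_mulVec, dotProduct_comm])
  have hBdet : IsUnit B.det := (isUnit_iff_isUnit_det B).mp hB
  refine ⟨B, A⁻¹ * B⁻¹ * Aᵀ, hB, ?_, ?_, hBv, ?_⟩
  · exact (hAinv.mul (isUnit_nonsing_inv_iff.mpr hB)).mul ((isUnit_transpose A).mpr hA)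
  · rw [← mul_assoc, ← mul_assoc, mul_nonsing_inv_cancel_right _ _ hdet,
      mul_nonsing_inv _ hBdet, one_mul]
  · rw [mul_assoc, ← vecMul_vecMul, ← hBw, vecMul_vecMul, mul_nonsing_inv_cancel_left _ _ hBdet,
      vecMul_transpose, mulVec_mulVec, mul_nonsing_inv _ hdet, one_mulVec]

end Field

variable {R m : Type*}

theorem exists_eq_fromBlocks_replicateCol_replicateRow (M : Matrix (m ⊕ Unit) (m ⊕ Unit) R) :
    ∃ A v φ d, M = fromBlocks A (replicateCol Unit v) (replicateRow Unit φ) d :=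
  ⟨_, fun i => M (.inl i) (.inr ()), fun j => M (.inr ()) (.inl j), _, by
    ext (i | i) (j | j) <;> rfl⟩

theorem fromBlocks_mul_mul_fromBlocks_eq_transpose [CommSemiring R] [Fintype m]
    {A B C : Matrix m m R} {v φ : m → R} (d : Matrix Unit Unit R) (hA : B * A * C = Aᵀ)
    (hv : B *ᵥ v = φ) (hφ : φ ᵥ* C = v) :
    fromBlocks B 0 0 1 * fromBlocks A (replicateCol Unit v) (replicateRow Unit φ) d *
      fromBlocks C 0 0 1 = (fromBlocks A (replicateCol Unit v) (replicateRow Unit φ) d)ᵀ := by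
  have hd : d = dᵀ := by ext ⟨⟩ ⟨⟩; rfl
  simp [fromBlocks_multiply, fromBlocks_transpose, ← replicateCol_mulVec, ← replicateRow_vecMul,
    hA, hv, hφ, ← hd]

end Matrix

theorem stmt8_general (F : Type*) [Field F] (n : ℕ)
    (A' : Matrix (Fin n ⊕ Unit) (Fin n ⊕ Unit) F)
    (hrank : (A'.toBlocks₁₁).rank = n)
    (hv : A'.toBlocks₁₂ ≠ 0) (hφ : A'.toBlocks₂₁ ≠ 0) :
    ∃ B C : Matrix (Fin n) (Fin n) F, IsUnit B ∧ IsUnit C ∧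
      Matrix.fromBlocks B 0 0 1 * A' * Matrix.fromBlocks C 0 0 1 = A'ᵀ := by
  obtain ⟨A, v, φ, d, rfl⟩ := A'.exists_eq_fromBlocks_replicateCol_replicateRow
  simp only [toBlocks_fromBlocks₁₁, toBlocks_fromBlocks₁₂, toBlocks_fromBlocks₂₁] at hrank hv hφ
  have hA : IsUnit A := isUnit_of_rank_eq_card (by simpa using hrank)
  obtain ⟨B, C, hB, hC, hBAC, hBv, hφC⟩ :=
    exists_isUnit_mul_mul_eq_transpose hA (v := v) (φ := φ) (by simpa using hv) (by simpa using hφ)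
  exact ⟨B, C, hB, hC, fromBlocks_mul_mul_fromBlocks_eq_transpose d hBAC hBv hφC⟩

/-- an invertible `(n+1)×(n+1)` matrix whose upper-left `n×n`
block has full rank `n` and whose last column part `v` and last row part `φ`
are both nonzero lies in the same `GL_n`-double coset as its transpose. -/
theorem stmt8 (F : Type*) [Field F] [Fintype F] (n : ℕ) (hn : 1 ≤ n)
    (A' : Matrix (Fin n ⊕ Unit) (Fin n ⊕ Unit) F) (hA' : IsUnit A')
    (hrank : (A'.toBlocks₁₁).rank = n)
    (hv : A'.toBlocks₁₂ ≠ 0) (hφ : A'.toBlocks₂₁ ≠ 0) :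
    ∃ B C : Matrix (Fin n) (Fin n) F, IsUnit B ∧ IsUnit C ∧
      Matrix.fromBlocks B 0 0 1 * A' * Matrix.fromBlocks C 0 0 1 = A'ᵀ :=
  stmt8_general F n A' hrank hv hφ
end

section
/- Let q be an odd prime power and embed O_n(F_q) into O_{n+1}(F_q) as the stabilizer of the last basis vector for the standard quadratic form. Then every O_n(F_q)-double coset in O_{n+1}(F_q) is preserved setwise by the transpose map. -/
/-!
Let `e` be the last basis vector, so that the embedded `O_n` is the stabilizer of `e`, and let
`v = g e`. Since `q` is odd, one of `e - v`, `e + v` is anisotropic, and the reflection in it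
(negated in the second case) is a symmetric involution `σ` swapping `e` and `v`. Then `a = gᵀ σ`
fixes `e`, and so does `aᵀ = σ g`, hence `a` lies in `O_n`; and `a g a = gᵀ σ σ = gᵀ`. So `gᵀ` lies
in the double coset of `g`, and therefore so does the transpose of every element of it.
-/

open Matrix

namespace Matrix

section Orthogonal

variable {ι R : Type*} [Fintype ι] [DecidableEq ι] [CommRing R]

theorem transpose_mul_self_mul {a b : Matrix ι ι R} (ha : aᵀ * a = 1) (hb : bᵀ * b = 1) :
    (a * b)ᵀ * (a * b) = 1 := by
  rw [transpose_mul, Matrix.mul_assoc, ← Matrix.mul_assoc aᵀ, ha, Matrix.one_mul, hb]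

theorem transpose_mulVec_dotProduct_mulVec {g : Matrix ι ι R} (hg : gᵀ * g = 1) (u w : ι → R) :
    g *ᵥ u ⬝ᵥ g *ᵥ w = u ⬝ᵥ w := by
  rw [dotProduct_mulVec, ← mulVec_transpose, mulVec_mulVec, hg, one_mulVec]

end Orthogonal

section Householder

variable {ι K : Type*} [Fintype ι] [DecidableEq ι] [Field K]

/-- The reflection in the hyperplane orthogonal to `w`; it is `1` when `w ⬝ᵥ w = 0`,
as `2 / 0 = 0`. -/
def householder (w : ι → K) : Matrix ι ι K :=
  1 - (2 / (w ⬝ᵥ w)) • vecMulVec w w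

theorem householder_transpose (w : ι → K) : (householder w)ᵀ = householder w := by
  rw [householder, transpose_sub, transpose_one, transpose_smul, transpose_vecMulVec]

theorem householder_mul_self {w : ι → K} (hw : w ⬝ᵥ w ≠ 0) :
    householder w * householder w = 1 := by
  have hP : vecMulVec w w * vecMulVec w w = (w ⬝ᵥ w) • vecMulVec w w := by
    rw [vecMulVec_mul_vecMulVec, vecMulVec_smul]
  have hc : (2 / (w ⬝ᵥ w)) * (2 / (w ⬝ᵥ w)) * (w ⬝ᵥ w) = 2 / (w ⬝ᵥ w) + 2 / (w ⬝ᵥ w) := by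
    field_simp
    ring
  simp only [householder, sub_mul, mul_sub, Matrix.one_mul, Matrix.mul_one, smul_mul_smul_comm, hP,
    smul_smul, hc, add_smul]
  abel

theorem householder_mulVec_of_two_mul {w u : ι → K} (hw : w ⬝ᵥ w ≠ 0)
    (hwu : w ⬝ᵥ w = 2 * (w ⬝ᵥ u)) : householder w *ᵥ u = u - w := by
  have hc : 2 / (w ⬝ᵥ w) * (w ⬝ᵥ u) = 1 := by
    rw [div_mul_eq_mul_div, ← hwu, div_self hw]
  rw [householder, sub_mulVec, one_mulVec, smul_mulVec, vecMulVec_mulVec,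
    op_smul_eq_smul, smul_smul, hc, one_smul]

theorem exists_symm_involution_mulVec_eq (h2 : (2 : K) ≠ 0) {e v : ι → K} (he : e ⬝ᵥ e = 1)
    (hv : v ⬝ᵥ v = 1) : ∃ σ : Matrix ι ι K, σᵀ = σ ∧ σ * σ = 1 ∧ σ *ᵥ e = v := by
  have hve : v ⬝ᵥ e = e ⬝ᵥ v := dotProduct_comm v e
  have hsub : (e - v) ⬝ᵥ (e - v) = 2 * ((e - v) ⬝ᵥ e) := by
    simp only [sub_dotProduct, dotProduct_sub, he, hv, hve]
    ring
  have hadd : (e + v) ⬝ᵥ (e + v) = 2 * ((e + v) ⬝ᵥ e) := by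
    simp only [add_dotProduct, dotProduct_add, he, hv, hve]
    ring
  by_cases hiso : (e - v) ⬝ᵥ (e - v) = 0
  · -- the two squared lengths add up to `4`, so they cannot both vanish
    have hw : (e + v) ⬝ᵥ (e + v) ≠ 0 := by
      have hsum : (e + v) ⬝ᵥ (e + v) + (e - v) ⬝ᵥ (e - v) = 2 * 2 := by
        simp only [add_dotProduct, dotProduct_add, sub_dotProduct, dotProduct_sub, he, hv, hve]
        ring
      rw [hiso, add_zero] at hsum
      rw [hsum]
      exact mul_ne_zero h2 h2
    refine ⟨-householder (e + v), ?_, ?_, ?_⟩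
    · rw [transpose_neg, householder_transpose]
    · rw [neg_mul_neg, householder_mul_self hw]
    · rw [neg_mulVec, householder_mulVec_of_two_mul hw hadd]
      abel
  · refine ⟨householder (e - v), householder_transpose _, householder_mul_self hiso, ?_⟩
    rw [householder_mulVec_of_two_mul hiso hsub]
    abel

end Householder

section BlockEmbedding

variable {m R : Type*} [Fintype m]

theorem fromBlocks_zero_one_mul [Semiring R] (a b : Matrix m m R) :
    fromBlocks a 0 0 (1 : Matrix Unit Unit R) * fromBlocks b 0 0 1 = fromBlocks (a * b) 0 0 1 := by
  simp [fromBlocks_multiply]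

theorem transpose_mul_self_fromBlocks_zero_one [DecidableEq m] [CommRing R] (h : Matrix m m R) :
    (fromBlocks h 0 0 (1 : Matrix Unit Unit R))ᵀ * fromBlocks h 0 0 1 = 1 ↔ hᵀ * h = 1 := by
  simp only [fromBlocks_transpose, transpose_zero, transpose_one, fromBlocks_zero_one_mul]
  rw [← fromBlocks_one (l := m) (m := Unit), fromBlocks_inj]
  simp

theorem eq_fromBlocks_zero_one_of_mulVec_single [DecidableEq m] [CommSemiring R]
    {a : Matrix (m ⊕ Unit) (m ⊕ Unit) R}
    (ha : a *ᵥ Pi.single (Sum.inr ()) 1 = Pi.single (Sum.inr ()) 1)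
    (ha' : aᵀ *ᵥ Pi.single (Sum.inr ()) 1 = Pi.single (Sum.inr ()) 1) :
    a = fromBlocks a.toBlocks₁₁ 0 0 1 := by
  rw [mulVec_single_one] at ha ha'
  conv_lhs => rw [← fromBlocks_toBlocks a]
  congr 1 <;> ext i j
  · simpa [toBlocks₁₂] using congrFun ha (Sum.inl i)
  · simpa [toBlocks₂₁] using congrFun ha' (Sum.inl j)
  · simpa [toBlocks₂₂] using congrFun ha (Sum.inr ())

end BlockEmbedding

section DoubleCoset

variable {m K : Type*} [Fintype m] [DecidableEq m] [Field K]

/-- The double coset `O_m g O_m`, for `O_m` embedded in `O_{m+1}` as the stabilizer of the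
last basis vector. -/
def orthDoubleCoset (g : Matrix (m ⊕ Unit) (m ⊕ Unit) K) : Set (Matrix (m ⊕ Unit) (m ⊕ Unit) K) :=
  {x | ∃ h₁ : Matrix m m K, h₁ᵀ * h₁ = 1 ∧ ∃ h₂ : Matrix m m K, h₂ᵀ * h₂ = 1 ∧
    x = fromBlocks h₁ 0 0 1 * g * fromBlocks h₂ 0 0 1}

theorem exists_transpose_eq_fromBlocks_mul_mul (h2 : (2 : K) ≠ 0)
    {g : Matrix (m ⊕ Unit) (m ⊕ Unit) K} (hg : gᵀ * g = 1) :
    ∃ h : Matrix m m K, hᵀ * h = 1 ∧ gᵀ = fromBlocks h 0 0 1 * g * fromBlocks h 0 0 1 := by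
  set e : m ⊕ Unit → K := Pi.single (Sum.inr ()) 1
  have hg' : g * gᵀ = 1 := mul_eq_one_comm.mp hg
  have hee : e ⬝ᵥ e = 1 := by simp [e]
  have hgee : g *ᵥ e ⬝ᵥ g *ᵥ e = 1 := by rw [transpose_mulVec_dotProduct_mulVec hg, hee]
  obtain ⟨σ, hσt, hσσ, hσe⟩ := exists_symm_involution_mulVec_eq h2 hee hgee
  have hσv : σ *ᵥ (g *ᵥ e) = e := by rw [← hσe, mulVec_mulVec, hσσ, one_mulVec]
  set a := gᵀ * σ with ha
  have hat : aᵀ = σ * g := by rw [ha, transpose_mul, transpose_transpose, hσt]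
  have hae : a *ᵥ e = e := by rw [ha, ← mulVec_mulVec, hσe, mulVec_mulVec, hg, one_mulVec]
  have hate : aᵀ *ᵥ e = e := by rw [hat, ← mulVec_mulVec, hσv]
  have hablock := eq_fromBlocks_zero_one_of_mulVec_single hae hate
  have haa : aᵀ * a = 1 := by
    rw [hat, ha, Matrix.mul_assoc, ← Matrix.mul_assoc g, hg', Matrix.one_mul, hσσ]
  refine ⟨a.toBlocks₁₁, ?_, ?_⟩
  · rwa [hablock, transpose_mul_self_fromBlocks_zero_one] at haa
  · rw [← hablock, ha, Matrix.mul_assoc _ g, ← Matrix.mul_assoc g, hg', Matrix.one_mul,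
      Matrix.mul_assoc, hσσ, Matrix.mul_one]

theorem transpose_mem_orthDoubleCoset (h2 : (2 : K) ≠ 0) {g x : Matrix (m ⊕ Unit) (m ⊕ Unit) K}
    (hg : gᵀ * g = 1) (hx : x ∈ orthDoubleCoset g) : xᵀ ∈ orthDoubleCoset g := by
  obtain ⟨h₁, hh₁, h₂, hh₂, rfl⟩ := hx
  obtain ⟨h, hh, hgt⟩ := exists_transpose_eq_fromBlocks_mul_mul h2 hg
  have orth_transpose {k : Matrix m m K} (hk : kᵀ * k = 1) : kᵀᵀ * kᵀ = 1 := by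
    rw [transpose_transpose, mul_eq_one_comm.mp hk]
  refine ⟨h₂ᵀ * h, transpose_mul_self_mul (orth_transpose hh₂) hh,
    h * h₁ᵀ, transpose_mul_self_mul hh (orth_transpose hh₁), ?_⟩
  simp only [transpose_mul, fromBlocks_transpose, transpose_zero, transpose_one, hgt,
    ← fromBlocks_zero_one_mul, Matrix.mul_assoc]

theorem image_transpose_orthDoubleCoset (h2 : (2 : K) ≠ 0) {g : Matrix (m ⊕ Unit) (m ⊕ Unit) K}
    (hg : gᵀ * g = 1) : transpose '' orthDoubleCoset g = orthDoubleCoset g := by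
  refine Set.Subset.antisymm ?_ fun x hx => ⟨xᵀ, transpose_mem_orthDoubleCoset h2 hg hx, ?_⟩
  · rintro _ ⟨x, hx, rfl⟩
    exact transpose_mem_orthDoubleCoset h2 hg hx
  · exact transpose_transpose x

end DoubleCoset

end Matrix

theorem FiniteField.two_ne_zero_of_odd_card {K : Type*} [Field K] [Fintype K]
    (hq : Odd (Fintype.card K)) : (2 : K) ≠ 0 :=
  Ring.two_ne_zero fun h => by
    have := FiniteField.even_card_iff_char_two.mp h
    rw [Nat.odd_iff] at hq
    omega

/-- every double coset of the embedded `O_n(F_q)` in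
`O_{n+1}(F_q)` is preserved setwise by transpose (`q` odd). -/
theorem stmt13 (K : Type*) [Field K] [Fintype K] (hq : Odd (Fintype.card K)) (n : ℕ) :
    ∀ g : Matrix (Fin n ⊕ Unit) (Fin n ⊕ Unit) K, gᵀ * g = 1 →
      (fun x : Matrix (Fin n ⊕ Unit) (Fin n ⊕ Unit) K => xᵀ) ''
          {x | ∃ h₁ : Matrix (Fin n) (Fin n) K, h₁ᵀ * h₁ = 1 ∧
               ∃ h₂ : Matrix (Fin n) (Fin n) K, h₂ᵀ * h₂ = 1 ∧
               x = Matrix.fromBlocks h₁ 0 0 1 * g * Matrix.fromBlocks h₂ 0 0 1}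
        = {x | ∃ h₁ : Matrix (Fin n) (Fin n) K, h₁ᵀ * h₁ = 1 ∧
               ∃ h₂ : Matrix (Fin n) (Fin n) K, h₂ᵀ * h₂ = 1 ∧
               x = Matrix.fromBlocks h₁ 0 0 1 * g * Matrix.fromBlocks h₂ 0 0 1} :=
  fun _ hg => image_transpose_orthDoubleCoset (FiniteField.two_ne_zero_of_odd_card hq) hg
end
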